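/- For every positive integer m there exists a Boolean circuit over the standard basis {∨₂, ∧₂, ¬} computing OR_m such that on every input containing at most one coordinate equal to 1, the number of activated inner gates is at most ⌈log₂ m⌉. -/
import Mathlib


/-- A gate in a Boolean circuit over the standard basis `{∨₂, ∧₂, ¬}`:
input gates labelled by variables, and `∧`/`∨`/`¬` gates
whose arguments are (indices of) earlier gates. -/
inductive Gate (n : ℕ) : Type where
  | input : Fin n → Gate n
  | and : ℕ → ℕ → Gate n
  | or : ℕ → ℕ → Gate n
  | not : ℕ → Gate n
deriving DecidableEq

/-- The indices of the incoming gates of a gate. -/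
def Gate.deps {n : ℕ} : Gate n → List ℕ
  | .and a b => [a, b]
  | .or a b => [a, b]
  | .not a => [a]
  | _ => []

/-- Inner gates are the non-input gates, i.e. `∧`, `∨`, `¬` gates. -/
def Gate.isInner {n : ℕ} : Gate n → Bool
  | .and _ _ => true
  | .or _ _ => true
  | .not _ => true
  | _ => false

/-- A Boolean circuit over the standard basis on `n` input variables: a sequence of
gates (topologically sorted, so each gate only takes earlier gates as inputs,
which makes the underlying graph acyclic) together with a designated output gate. -/
structure Circuit (n : ℕ) : Type where
  size : ℕ
  gates : Fin size → Gate n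
  out : Fin size
  wf : ∀ i : Fin size, ∀ j ∈ (gates i).deps, j < (i : ℕ)

/-- The Boolean value of gate `i` of circuit `C` under input `x`. -/
def Circuit.evalGate {n : ℕ} (C : Circuit n) (x : Fin n → Bool) (i : ℕ) (h : i < C.size) :
    Bool :=
  match hg : C.gates ⟨i, h⟩ with
  | .input j => x j
  | .not a =>
      have ha : a < i := C.wf ⟨i, h⟩ a (by rw [hg]; simp [Gate.deps])
      ! C.evalGate x a (ha.trans h)
  | .and a b =>
      have ha : a < i := C.wf ⟨i, h⟩ a (by rw [hg]; simp [Gate.deps])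
      have hb : b < i := C.wf ⟨i, h⟩ b (by rw [hg]; simp [Gate.deps])
      C.evalGate x a (ha.trans h) && C.evalGate x b (hb.trans h)
  | .or a b =>
      have ha : a < i := C.wf ⟨i, h⟩ a (by rw [hg]; simp [Gate.deps])
      have hb : b < i := C.wf ⟨i, h⟩ b (by rw [hg]; simp [Gate.deps])
      C.evalGate x a (ha.trans h) || C.evalGate x b (hb.trans h)
termination_by i

/-- The output of circuit `C` on input `x`. -/
def Circuit.output {n : ℕ} (C : Circuit n) (x : Fin n → Bool) : Bool :=
  C.evalGate x C.out C.out.isLt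

/-- `C` computes the Boolean function `f`. -/
def Circuit.Computes {n : ℕ} (C : Circuit n) (f : (Fin n → Bool) → Bool) : Prop :=
  ∀ x, C.output x = f x

/-- The number of activated inner gates of `C` under input `x`. -/
def Circuit.energyAt {n : ℕ} (C : Circuit n) (x : Fin n → Bool) : ℕ :=
  (Finset.univ.filter fun i : Fin C.size =>
    (C.gates i).isInner = true ∧ C.evalGate x i i.isLt = true).card

/-- The energy complexity `EC(C)` of a circuit `C`: the maximum number of
activated inner gates over all inputs. -/
def Circuit.energy {n : ℕ} (C : Circuit n) : ℕ :=
  Finset.univ.sup fun x : Fin n → Bool => C.energyAt x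

/-- The energy complexity `EC(f)` of a Boolean function `f`: the minimum of `EC(C)`
over all circuits `C` computing `f`. -/
noncomputable def EC {n : ℕ} (f : (Fin n → Bool) → Bool) : ℕ :=
  sInf {k | ∃ C : Circuit n, C.Computes f ∧ C.energy = k}

/-- The `m`-bit OR function. -/
def ORf (m : ℕ) : (Fin m → Bool) → Bool := fun x => decide (∃ i, x i = true)

namespace Stmt12

/-- OR-trees with natural-number leaf labels. -/
inductive Tr : Type where
  | leaf : ℕ → Tr
  | node : Tr → Tr → Tr

def Tr.size : Tr → ℕ
  | .leaf _ => 1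
  | .node l r => l.size + r.size + 1

lemma Tr.size_pos (t : Tr) : 0 < t.size := by
  cases t <;> simp [Tr.size]

variable {m : ℕ}

def yof (hm : 0 < m) (x : Fin m → Bool) (j : ℕ) : Bool := x ⟨j % m, Nat.mod_lt _ hm⟩

def Tr.eval (hm : 0 < m) (x : Fin m → Bool) : Tr → Bool
  | .leaf j => yof hm x j
  | .node l r => l.eval hm x || r.eval hm x

def Tr.act (hm : 0 < m) (x : Fin m → Bool) : Tr → ℕ
  | .leaf _ => 0
  | .node l r => l.act hm x + r.act hm x + (if (Tr.node l r).eval hm x then 1 else 0)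

def Tr.compile (hm : 0 < m) : Tr → ℕ → List (Gate m)
  | .leaf j, _ => [.input ⟨j % m, Nat.mod_lt _ hm⟩]
  | .node l r, o =>
      l.compile hm o ++ r.compile hm (o + l.size) ++
        [.or (o + l.size - 1) (o + l.size + r.size - 1)]

lemma Tr.length_compile (hm : 0 < m) (t : Tr) (o : ℕ) :
    (t.compile hm o).length = t.size := by
  induction t generalizing o with
  | leaf j => simp [Tr.compile, Tr.size]
  | node l r ihl ihr => simp [Tr.compile, Tr.size, ihl, ihr]; omega

lemma Tr.compile_node_get_left (hm : 0 < m) (l r : Tr) (o k : ℕ) (h1 : k < l.size)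
    (hk : k < ((Tr.node l r).compile hm o).length) :
    ((Tr.node l r).compile hm o).get ⟨k, hk⟩ =
      (l.compile hm o).get ⟨k, by rw [Tr.length_compile]; exact h1⟩ := by
  have hls : (l.compile hm o).length = l.size := Tr.length_compile hm l o
  have hrs : (r.compile hm (o + l.size)).length = r.size := Tr.length_compile hm r (o + l.size)
  simp only [Tr.compile, List.get_eq_getElem]
  rw [List.getElem_append_left, List.getElem_append_left] <;>
    first | rfl | (simp [hls, hrs]; omega) | omega

lemma Tr.compile_node_get_right (hm : 0 < m) (l r : Tr) (o k : ℕ) (h1 : k < r.size)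
    (hk : l.size + k < ((Tr.node l r).compile hm o).length) :
    ((Tr.node l r).compile hm o).get ⟨l.size + k, hk⟩ =
      (r.compile hm (o + l.size)).get ⟨k, by rw [Tr.length_compile]; exact h1⟩ := by
  have hls : (l.compile hm o).length = l.size := Tr.length_compile hm l o
  have hrs : (r.compile hm (o + l.size)).length = r.size := Tr.length_compile hm r (o + l.size)
  have hab : (l.compile hm o ++ r.compile hm (o + l.size)).length = l.size + r.size := by
    simp [hls, hrs]
  simp only [Tr.compile, List.get_eq_getElem]
  rw [List.getElem_append_left (by omega), List.getElem_append_right (by omega)]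
  simp only [hls, Nat.add_sub_cancel_left]

lemma Tr.compile_node_get_last (hm : 0 < m) (l r : Tr) (o : ℕ)
    (hk : l.size + r.size < ((Tr.node l r).compile hm o).length) :
    ((Tr.node l r).compile hm o).get ⟨l.size + r.size, hk⟩ =
      .or (o + l.size - 1) (o + l.size + r.size - 1) := by
  have hls : (l.compile hm o).length = l.size := Tr.length_compile hm l o
  have hrs : (r.compile hm (o + l.size)).length = r.size := Tr.length_compile hm r (o + l.size)
  have hab : (l.compile hm o ++ r.compile hm (o + l.size)).length = l.size + r.size := by
    simp [hls, hrs]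
  simp only [Tr.compile, List.get_eq_getElem]
  rw [List.getElem_append_right (by omega), List.getElem_singleton]

lemma Tr.deps_compile (hm : 0 < m) (t : Tr) (o : ℕ) :
    ∀ k (hk : k < (t.compile hm o).length),
      ∀ j ∈ ((t.compile hm o).get ⟨k, hk⟩).deps, o ≤ j ∧ j < o + k := by
  induction t generalizing o with
  | leaf j =>
      intro k hk j hj
      simp [Tr.compile] at hk
      subst hk
      simp [Tr.compile, Gate.deps] at hj
  | node l r ihl ihr =>
      intro k hk j hj
      have hls : (l.compile hm o).length = l.size := Tr.length_compile hm l o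
      have hrs : (r.compile hm (o + l.size)).length = r.size :=
        Tr.length_compile hm r (o + l.size)
      have hk' : k < l.size + r.size + 1 := by
        have := Tr.length_compile hm (Tr.node l r) o
        simpa [Tr.size, this] using hk
      have hlp := l.size_pos
      have hrp := r.size_pos
      by_cases h1 : k < l.size
      · rw [Tr.compile_node_get_left hm l r o k h1] at hj
        have := ihl o k (by omega) j hj
        omega
      · by_cases h2 : k < l.size + r.size
        · obtain ⟨c, rfl⟩ := Nat.exists_eq_add_of_le (Nat.le_of_not_lt h1)
          rw [Tr.compile_node_get_right hm l r o c (by omega)] at hj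
          have := ihr (o + l.size) c (by omega) j hj
          omega
        · have hkc : k = l.size + r.size := by omega
          subst hkc
          rw [Tr.compile_node_get_last hm l r o] at hj
          simp [Gate.deps] at hj
          rcases hj with hj | hj <;> omega

lemma evalGate_input {n : ℕ} (C : Circuit n) (x : Fin n → Bool) (i : ℕ) (h : i < C.size)
    (j : Fin n) (hg : C.gates ⟨i, h⟩ = .input j) : C.evalGate x i h = x j := by
  rw [Circuit.evalGate]
  split <;> simp_all

lemma evalGate_or {n : ℕ} (C : Circuit n) (x : Fin n → Bool) (i : ℕ) (h : i < C.size)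
    (a b : ℕ) (hg : C.gates ⟨i, h⟩ = .or a b) (ha : a < i) (hb : b < i) :
    C.evalGate x i h = (C.evalGate x a (ha.trans h) || C.evalGate x b (hb.trans h)) := by
  rw [Circuit.evalGate]
  split <;> simp_all

lemma gates_congr {n : ℕ} (C : Circuit n) {i i' : ℕ} (e : i = i') (h : i < C.size) :
    C.gates ⟨i, h⟩ = C.gates ⟨i', e ▸ h⟩ := by subst e; rfl

lemma evalGate_congr {n : ℕ} (C : Circuit n) (x : Fin n → Bool) {i i' : ℕ} (e : i = i')
    (h : i < C.size) : C.evalGate x i h = C.evalGate x i' (e ▸ h) := by subst e; rfl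

/-- The contribution of gate `i` to the energy. -/
def gval (C : Circuit m) (x : Fin m → Bool) (i : ℕ) : ℕ :=
  if h : i < C.size then
    (if (C.gates ⟨i, h⟩).isInner = true ∧ C.evalGate x i h = true then 1 else 0)
  else 0

lemma main_lemma (hm : 0 < m) (C : Circuit m) (x : Fin m → Bool) (t : Tr) (o : ℕ)
    (hs : o + t.size ≤ C.size)
    (H : ∀ k (hk : k < t.size), C.gates ⟨o + k, by omega⟩ =
      (t.compile hm o).get ⟨k, by rw [Tr.length_compile]; exact hk⟩) :
    (∀ h : o + t.size - 1 < C.size, C.evalGate x (o + t.size - 1) h = t.eval hm x) ∧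
    (∑ k ∈ Finset.range t.size, gval C x (o + k)) = t.act hm x := by
  induction t generalizing o with
  | leaf j =>
      have h0 := H 0 (by simp [Tr.size])
      simp only [Tr.compile, List.get] at h0
      simp only [Nat.add_zero] at h0
      have hos : o < C.size := by simp [Tr.size] at hs; omega
      constructor
      · intro h
        have := evalGate_input C x (o + (Tr.leaf j).size - 1) h ⟨j % m, Nat.mod_lt _ hm⟩ h0
        rw [this]
        simp [Tr.eval, yof]
      · show (∑ k ∈ Finset.range 1, gval C x (o + k)) = 0
        rw [Finset.sum_range_one]
        simp [gval, h0, Gate.isInner, hos]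
  | node l r ihl ihr =>
      have hlp := l.size_pos
      have hrp := r.size_pos
      have hsz : (Tr.node l r).size = l.size + r.size + 1 := rfl
      have hs' : o + (l.size + r.size + 1) ≤ C.size := by rw [hsz] at hs; omega
      have Hl : ∀ k (hk : k < l.size), C.gates ⟨o + k, by omega⟩ =
          (l.compile hm o).get ⟨k, by rw [Tr.length_compile]; exact hk⟩ := by
        intro k hk
        rw [H k (by rw [hsz]; omega)]
        exact Tr.compile_node_get_left hm l r o k hk _
      have Hr : ∀ k (hk : k < r.size), C.gates ⟨o + l.size + k, by omega⟩ =
          (r.compile hm (o + l.size)).get ⟨k, by rw [Tr.length_compile]; exact hk⟩ := by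
        intro k hk
        have h2 := H (l.size + k) (by rw [hsz]; omega)
        rw [Tr.compile_node_get_right hm l r o k hk] at h2
        rw [← h2]
        exact gates_congr C (by omega) _
      obtain ⟨evalL, sumL⟩ := ihl o (by omega) Hl
      obtain ⟨evalR, sumR⟩ := ihr (o + l.size) (by omega) Hr
      have Hlast : C.gates ⟨o + (l.size + r.size), by omega⟩ =
          .or (o + l.size - 1) (o + l.size + r.size - 1) := by
        have h2 := H (l.size + r.size) (by rw [hsz]; omega)
        rw [Tr.compile_node_get_last hm l r o] at h2
        exact h2
      have heval : ∀ h : o + (l.size + r.size) < C.size,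
          C.evalGate x (o + (l.size + r.size)) h = (Tr.node l r).eval hm x := by
        intro h
        rw [evalGate_or C x _ h _ _ Hlast (by omega) (by omega)]
        have e1 := evalL (show o + l.size - 1 < C.size by omega)
        have e2 := evalR (show o + l.size + r.size - 1 < C.size by omega)
        rw [show (Tr.node l r).eval hm x = (l.eval hm x || r.eval hm x) from rfl,
          ← e1, ← e2]
      refine ⟨?_, ?_⟩
      · intro h
        rw [evalGate_congr C x
          (show o + (Tr.node l r).size - 1 = o + (l.size + r.size) by rw [hsz]; omega) h]
        exact heval _
      · rw [show (Tr.node l r).size = (l.size + r.size) + 1 from rfl,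
          Finset.sum_range_succ, Finset.sum_range_add]
        have hmid : ∑ k ∈ Finset.range r.size, gval C x (o + (l.size + k)) =
            ∑ k ∈ Finset.range r.size, gval C x (o + l.size + k) :=
          Finset.sum_congr rfl fun k _ => by rw [Nat.add_assoc]
        rw [hmid, sumL, sumR]
        have hglast : gval C x (o + (l.size + r.size)) =
            (if (Tr.node l r).eval hm x then 1 else 0) := by
          rw [gval, dif_pos (show o + (l.size + r.size) < C.size by omega)]
          rw [heval, Hlast]
          simp [Gate.isInner]
        rw [hglast]
        rfl

/-- Balanced OR-tree over the interval `[lo, lo+len)`. -/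
def bal (lo len : ℕ) : Tr :=
  if len ≤ 1 then .leaf lo
  else .node (bal lo (len / 2)) (bal (lo + len / 2) (len - len / 2))
termination_by len
decreasing_by all_goals omega

lemma eval_bal (hm : 0 < m) (x : Fin m → Bool) :
    ∀ len lo, 0 < len →
      ((bal lo len).eval hm x = true ↔ ∃ j, lo ≤ j ∧ j < lo + len ∧ yof hm x j = true) := by
  intro len
  induction len using Nat.strong_induction_on with
  | _ len ih =>
    intro lo hlen
    rw [bal]
    by_cases h1 : len ≤ 1
    · have : len = 1 := by omega
      subst this
      simp only [if_pos h1, Tr.eval]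
      constructor
      · intro h; exact ⟨lo, le_refl _, by omega, h⟩
      · rintro ⟨j, hj1, hj2, hj3⟩
        have : j = lo := by omega
        subst this; exact hj3
    · rw [if_neg h1]
      have h2 : 2 ≤ len := by omega
      have e1 := ih (len / 2) (by omega) lo (by omega)
      have e2 := ih (len - len / 2) (by omega) (lo + len / 2) (by omega)
      simp only [Tr.eval, Bool.or_eq_true, e1, e2]
      constructor
      · rintro (⟨j, hj1, hj2, hj3⟩ | ⟨j, hj1, hj2, hj3⟩)
        · exact ⟨j, by omega, by omega, hj3⟩
        · exact ⟨j, by omega, by omega, hj3⟩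
      · rintro ⟨j, hj1, hj2, hj3⟩
        by_cases hj : j < lo + len / 2
        · exact Or.inl ⟨j, by omega, by omega, hj3⟩
        · exact Or.inr ⟨j, by omega, by omega, hj3⟩

lemma act_of_eval_false (hm : 0 < m) (x : Fin m → Bool) (t : Tr)
    (h : t.eval hm x = false) : t.act hm x = 0 := by
  induction t with
  | leaf j => rfl
  | node l r ihl ihr =>
      have hl : l.eval hm x = false := by
        simp [Tr.eval] at h; exact h.1
      have hr : r.eval hm x = false := by
        simp [Tr.eval] at h; exact h.2
      simp [Tr.act, Tr.eval, hl, hr, ihl hl, ihr hr]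

lemma act_bal (hm : 0 < m) (x : Fin m → Bool)
    (hx : (Finset.univ.filter fun i : Fin m => x i = true).card ≤ 1) :
    ∀ len lo, 0 < len → lo + len ≤ m → (bal lo len).act hm x ≤ Nat.clog 2 len := by
  intro len
  induction len using Nat.strong_induction_on with
  | _ len ih =>
    intro lo hlen hm2
    rw [bal]
    by_cases h1 : len ≤ 1
    · rw [if_pos h1]
      exact Nat.zero_le _
    · rw [if_neg h1]
      have h2 : 2 ≤ len := by omega
      have hclog : Nat.clog 2 len = Nat.clog 2 ((len + 1) / 2) + 1 := by
        rw [Nat.clog_of_two_le (by norm_num) h2]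
        have e : len + 2 - 1 = len + 1 := by omega
        rw [e]
      have hhalf : len - len / 2 = (len + 1) / 2 := by omega
      have hnotboth : ¬((bal lo (len / 2)).eval hm x = true ∧
          (bal (lo + len / 2) (len - len / 2)).eval hm x = true) := by
        rintro ⟨hL, hR⟩
        obtain ⟨j1, hj11, hj12, hj13⟩ := (eval_bal hm x _ _ (by omega)).mp hL
        obtain ⟨j2, hj21, hj22, hj23⟩ := (eval_bal hm x _ _ (by omega)).mp hR
        have hj1m : j1 < m := by omega
        have hj2m : j2 < m := by omega
        have hx1 : x ⟨j1, hj1m⟩ = true := by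
          have e : j1 % m = j1 := Nat.mod_eq_of_lt hj1m
          simpa [yof, e] using hj13
        have hx2 : x ⟨j2, hj2m⟩ = true := by
          have e : j2 % m = j2 := Nat.mod_eq_of_lt hj2m
          simpa [yof, e] using hj23
        have hne : (⟨j1, hj1m⟩ : Fin m) ≠ ⟨j2, hj2m⟩ := by
          simp only [ne_eq, Fin.mk.injEq]; omega
        have hsub : ({⟨j1, hj1m⟩, ⟨j2, hj2m⟩} : Finset (Fin m)) ⊆
            Finset.univ.filter fun i : Fin m => x i = true := by
          intro a ha
          simp only [Finset.mem_insert, Finset.mem_singleton] at ha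
          rcases ha with rfl | rfl <;> simp [hx1, hx2]
        have hcard := Finset.card_le_card hsub
        rw [Finset.card_pair hne] at hcard
        omega
      have ihL := ih (len / 2) (by omega) lo (by omega) (by omega)
      have ihR := ih (len - len / 2) (by omega) (lo + len / 2) (by omega) (by omega)
      have ihR' : (bal (lo + len / 2) (len - len / 2)).act hm x ≤
          Nat.clog 2 ((len + 1) / 2) := by rw [← hhalf]; exact ihR
      have hmonoL : Nat.clog 2 (len / 2) ≤ Nat.clog 2 ((len + 1) / 2) :=
        Nat.clog_mono_right 2 (by omega)
      simp only [Tr.act]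
      rw [hclog]
      by_cases hL : (bal lo (len / 2)).eval hm x = true
      · have hR : (bal (lo + len / 2) (len - len / 2)).eval hm x = false := by
          by_contra hc
          exact hnotboth ⟨hL, by simpa using hc⟩
        have hactR := act_of_eval_false hm x _ hR
        have hite : (Tr.node (bal lo (len / 2))
            (bal (lo + len / 2) (len - len / 2))).eval hm x = true := by
          simp [Tr.eval, hL]
        rw [hactR, if_pos hite]
        omega
      · have hL' : (bal lo (len / 2)).eval hm x = false := by simpa using hL
        have hactL := act_of_eval_false hm x _ hL'
        have hite : (Tr.node (bal lo (len / 2))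
            (bal (lo + len / 2) (len - len / 2))).eval hm x =
            (bal (lo + len / 2) (len - len / 2)).eval hm x := by
          simp [Tr.eval, hL']
        rw [hactL, hite]
        by_cases hR : (bal (lo + len / 2) (len - len / 2)).eval hm x = true
        · rw [if_pos hR]
          omega
        · rw [if_neg hR]
          have hactR := act_of_eval_false hm x _ (by simpa using hR)
          omega

lemma energyAt_eq (C : Circuit m) (x : Fin m → Bool) :
    C.energyAt x = ∑ k ∈ Finset.range C.size, gval C x k := by
  rw [Circuit.energyAt, Finset.card_filter,
    ← Fin.sum_univ_eq_sum_range (fun k => gval C x k) C.size]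
  apply Finset.sum_congr rfl
  intro i _
  rw [gval, dif_pos i.isLt]

/-- The balanced OR circuit. -/
def theC (hm : 0 < m) : Circuit m where
  size := (bal 0 m).size
  gates i := ((bal 0 m).compile hm 0).get ⟨i.val, by rw [Tr.length_compile]; exact i.isLt⟩
  out := ⟨(bal 0 m).size - 1, by have := (bal 0 m).size_pos; omega⟩
  wf i j hj := by
    have := Tr.deps_compile hm (bal 0 m) 0 i.val
      (by rw [Tr.length_compile]; exact i.isLt) j hj
    omega

lemma theC_H (hm : 0 < m) : ∀ k (hk : k < (bal 0 m).size),
    (theC hm).gates ⟨0 + k, by simp only [theC]; omega⟩ =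
      ((bal 0 m).compile hm 0).get ⟨k, by rw [Tr.length_compile]; exact hk⟩ := by
  intro k hk
  show ((bal 0 m).compile hm 0).get ⟨0 + k, _⟩ = _
  congr 1
  exact Fin.ext (Nat.zero_add k)

lemma theC_main (hm : 0 < m) (x : Fin m → Bool) :
    (theC hm).output x = (bal 0 m).eval hm x ∧
      (theC hm).energyAt x = (bal 0 m).act hm x := by
  obtain ⟨he, hsum⟩ := main_lemma hm (theC hm) x (bal 0 m) 0
    (by simp only [theC]; omega) (theC_H hm)
  constructor
  · rw [Circuit.output,
      evalGate_congr (theC hm) x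
        (show ((theC hm).out : ℕ) = 0 + (bal 0 m).size - 1 by
          simp only [theC]; omega) (theC hm).out.isLt]
    exact he _
  · rw [energyAt_eq, show (theC hm).size = (bal 0 m).size from rfl, ← hsum]
    exact Finset.sum_congr rfl fun k _ => by rw [Nat.zero_add]

end Stmt12

/-- For every positive integer `m` there is a circuit computing `OR_m`
such that on every input with at most one coordinate equal to `1`, the number of
activated inner gates is at most `⌈log₂ m⌉` (i.e. `Nat.clog 2 m`). -/
theorem stmt12 (m : ℕ) (hm : 0 < m) :
    ∃ C : Circuit m, C.Computes (ORf m) ∧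
      ∀ x : Fin m → Bool,
        (Finset.univ.filter fun i : Fin m => x i = true).card ≤ 1 →
        C.energyAt x ≤ Nat.clog 2 m := by
  refine ⟨Stmt12.theC hm, ?_, ?_⟩
  · intro x
    obtain ⟨he, -⟩ := Stmt12.theC_main hm x
    rw [he]
    have hiff : ((Stmt12.bal 0 m).eval hm x = true) ↔ (∃ i, x i = true) := by
      rw [Stmt12.eval_bal hm x m 0 hm]
      constructor
      · rintro ⟨j, -, -, hj3⟩
        exact ⟨⟨j % m, Nat.mod_lt _ hm⟩, hj3⟩
      · rintro ⟨i, hi⟩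
        refine ⟨i.val, Nat.zero_le _, by omega, ?_⟩
        have : (⟨i.val % m, Nat.mod_lt _ hm⟩ : Fin m) = i :=
          Fin.ext (Nat.mod_eq_of_lt i.isLt)
        rw [Stmt12.yof, this]
        exact hi
    cases hv : (Stmt12.bal 0 m).eval hm x with
    | false => rw [hv] at hiff; simp [ORf]; simpa using hiff
    | true =>
        rw [hv] at hiff
        simp only [ORf]
        symm
        rw [decide_eq_true_iff]
        exact hiff.mp rfl
  · intro x hx
    obtain ⟨-, hen⟩ := Stmt12.theC_main hm x
    rw [hen]
    exact Stmt12.act_bal hm x hx m 0 hm (by omega)
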